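/- arXiv:1504.08159 — 5 statements merged into one kernel-verified Lean document; each statement's English description precedes it below -/
import Mathlib

section
/- Let A ⊆ 𝕊¹×ℝ^d be a compact set (𝕊¹ = ℝ/ℤ) such that for some n ∈ ℕ and c > 0, every section A_s = {x ∈ ℝ^d : (s,x) ∈ A} has exactly n elements and any two distinct points of A_s are at distance at least c. Then there exist m ≤ n continuous functions ψ_1,…,ψ_m : ℝ → ℝ^d, each ψ_j periodic with some positive integer period τ_j, with τ_1 + ⋯ + τ_m = n, such that A = ⋃_{j=1}^m {(s mod 1, ψ_j(s)) : s ∈ [0, τ_j)}. In other words, A is the union of finitely many closed curves, each the graph of a continuous integer-periodic function. -/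
/-!
The projection `A → ℝ/ℤ` is a closed map, injective on `c/2`-balls, whose fibres all have `n`
points; by pigeonhole it is also open, hence a local homeomorphism and so an `n`-sheeted covering
map. Lifting `ℝ → ℝ/ℤ` through it from each of the `n` points over `0` gives continuous lifts, and
going once around the circle permutes their starting points. Each cycle of length `τ` of this
monodromy yields one `τ`-periodic lift, and these lifts restricted to `[0, τ)` exhaust `A`.
-/

open Set Function Topology

section CoveringOfLocallyInjective

variable {E X : Type*} [TopologicalSpace E] [TopologicalSpace X] {p : E → X}

/-- Pigeonhole: the fibres near `p a` lie in the union of injectivity neighbourhoods of the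
`n` points of `p ⁻¹' {p a}` and have `n` points, so they meet each of these neighbourhoods. -/
theorem IsClosedMap.image_mem_nhds_of_isLocallyInjective (hcl : IsClosedMap p)
    (hinj : IsLocallyInjective p) {n : ℕ} (hfin : ∀ x, (p ⁻¹' {x}).Finite)
    (hcard : ∀ x, (p ⁻¹' {x}).ncard = n) {a : E} {W : Set E} (hW : W ∈ 𝓝 a) :
    p '' W ∈ 𝓝 (p a) := by
  classical
  choose I hI hIinj using isLocallyInjective_iff_nhds.mp hinj
  set S := p ⁻¹' {p a}
  let U : E → Set E := fun e => I e ∩ if e = a then W else univ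
  have hU (e : E) : U e ∈ 𝓝 e := by
    refine Filter.inter_mem (hI e) ?_
    split_ifs with h
    · exact h ▸ hW
    · exact Filter.univ_mem
  set O := ⋃ e : S, interior (U e)
  have hO : IsOpen O := isOpen_iUnion fun _ => isOpen_interior
  refine Filter.mem_of_superset ((hcl _ hO.isClosed_compl).isOpen_compl.mem_nhds ?_) ?_
  · rintro ⟨z, hzO, hz⟩
    exact hzO (mem_iUnion.mpr ⟨⟨z, hz⟩, mem_interior_iff_mem_nhds.mpr (hU z)⟩)
  intro y hy
  have hfib (z : p ⁻¹' {y}) : ∃ e : S, z.1 ∈ U e := by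
    by_contra! h
    refine hy ⟨z, fun hzO => ?_, z.2⟩
    obtain ⟨e, he⟩ := mem_iUnion.mp hzO
    exact h e (interior_subset he)
  choose f hf using hfib
  have hf_inj : Injective f := fun z z' hzz' =>
    Subtype.ext (hIinj _ (hf z).1 (hzz' ▸ (hf z').1) (z.2.trans z'.2.symm))
  have := (hfin (p a)).to_subtype
  obtain ⟨z, hz⟩ := (hf_inj.bijective_of_nat_card_le (by
    rw [Nat.card_coe_set_eq, Nat.card_coe_set_eq, hcard, hcard])).2 ⟨a, rfl⟩
  have hzW : z.1 ∈ W := by simpa [U, hz] using (hf z).2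
  exact ⟨z, hzW, z.2⟩

theorem IsClosedMap.isOpenMap_of_isLocallyInjective (hcl : IsClosedMap p)
    (hinj : IsLocallyInjective p) {n : ℕ} (hfin : ∀ x, (p ⁻¹' {x}).Finite)
    (hcard : ∀ x, (p ⁻¹' {x}).ncard = n) : IsOpenMap p :=
  .of_nhds_le fun _ => Filter.le_map fun _ =>
    hcl.image_mem_nhds_of_isLocallyInjective hinj hfin hcard

theorem IsLocallyInjective.isLocalHomeomorph (hcont : Continuous p) (hopen : IsOpenMap p)
    (hinj : IsLocallyInjective p) : IsLocalHomeomorph p :=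
  isLocalHomeomorph_iff_isOpenEmbedding_restrict.mpr fun x => by
    obtain ⟨U, hU, hxU, hUinj⟩ := hinj x
    exact ⟨U, hU.mem_nhds hxU, .of_continuous_injective_isOpenMap
      (hcont.comp continuous_subtype_val) (injOn_iff_injective.mp hUinj) (hopen.domRestrict hU)⟩

theorem IsClosedMap.isCoveringMap_of_isLocallyInjective [T2Space E] (hcont : Continuous p)
    (hcl : IsClosedMap p) (hinj : IsLocallyInjective p) {n : ℕ}
    (hfin : ∀ x, (p ⁻¹' {x}).Finite) (hcard : ∀ x, (p ⁻¹' {x}).ncard = n) :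
    IsCoveringMap p :=
  isCoveringMap_iff_isCoveringMapOn_univ.mpr <|
    hcl.isCoveringMapOn_of_isLocalHomeomorphOn (fun x _ => hfin x) <|
      (hinj.isLocalHomeomorph hcont (hcl.isOpenMap_of_isLocallyInjective hinj hfin hcard))
        |>.isLocalHomeomorphOn

end CoveringOfLocallyInjective

theorem apply_mem_fiber_zero {E : Type*} {p : E → AddCircle (1 : ℝ)} (e : p ⁻¹' {0}) :
    p e = ((0 : ℝ) : AddCircle (1 : ℝ)) := by
  rw [QuotientAddGroup.mk_zero]; exact e.2

namespace IsCoveringMap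

variable {E : Type*} [TopologicalSpace E] {p : E → AddCircle (1 : ℝ)}

theorem exists_lift_coe (hp : IsCoveringMap p) (t₀ : ℝ) (x : E) (hx : p x = t₀) :
    ∃ F : C(ℝ, E), F t₀ = x ∧ p ∘ F = (↑) :=
  (hp.existsUnique_continuousMap_lifts ⟨(↑), continuous_quotient_mk'⟩ t₀ x hx).exists

noncomputable def liftCoe (hp : IsCoveringMap p) (e : p ⁻¹' {0}) : C(ℝ, E) :=
  (hp.exists_lift_coe 0 e (apply_mem_fiber_zero e)).choose

theorem liftCoe_zero (hp : IsCoveringMap p) (e : p ⁻¹' {0}) : hp.liftCoe e 0 = e :=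
  (hp.exists_lift_coe 0 e (apply_mem_fiber_zero e)).choose_spec.1

theorem apply_liftCoe (hp : IsCoveringMap p) (e : p ⁻¹' {0}) (t : ℝ) :
    p (hp.liftCoe e t) = t :=
  congrFun (hp.exists_lift_coe 0 e (apply_mem_fiber_zero e)).choose_spec.2 t

theorem eq_liftCoe (hp : IsCoveringMap p) {F : ℝ → E} (hF : Continuous F)
    (hpF : ∀ t, p (F t) = t) {t₀ : ℝ} (e : p ⁻¹' {0}) (h : F t₀ = hp.liftCoe e t₀) :
    F = hp.liftCoe e :=
  hp.eq_of_comp_eq hF (hp.liftCoe e).continuous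
    (funext fun t => by simp [hpF, hp.apply_liftCoe]) t₀ h

noncomputable def circleMonodromy (hp : IsCoveringMap p) (e : p ⁻¹' {0}) : p ⁻¹' {0} :=
  ⟨hp.liftCoe e 1, by simp [hp.apply_liftCoe]⟩

theorem liftCoe_add_one (hp : IsCoveringMap p) (e : p ⁻¹' {0}) (t : ℝ) :
    hp.liftCoe e (t + 1) = hp.liftCoe (hp.circleMonodromy e) t :=
  congrFun (hp.eq_liftCoe ((hp.liftCoe e).continuous.comp (continuous_add_const 1))
    (fun t => by simp [hp.apply_liftCoe]) (t₀ := 0) _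
    (by simp [circleMonodromy, liftCoe_zero])) t

theorem liftCoe_add_nat (hp : IsCoveringMap p) (e : p ⁻¹' {0}) (t : ℝ) (k : ℕ) :
    hp.liftCoe e (t + k) = hp.liftCoe (hp.circleMonodromy^[k] e) t := by
  induction k generalizing e t with
  | zero => simp
  | succ k ih =>
    rw [Nat.cast_succ, add_comm (k : ℝ), ← add_assoc, ih, liftCoe_add_one, iterate_succ_apply']

theorem liftCoe_add_minimalPeriod (hp : IsCoveringMap p) (e : p ⁻¹' {0}) (t : ℝ) :
    hp.liftCoe e (t + minimalPeriod hp.circleMonodromy e) = hp.liftCoe e t := by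
  rw [liftCoe_add_nat, iterate_minimalPeriod]

theorem circleMonodromy_injective (hp : IsCoveringMap p) : Injective hp.circleMonodromy :=
  fun e e' h => by
    have := hp.eq_liftCoe (hp.liftCoe e).continuous (hp.apply_liftCoe e) (t₀ := 1) e'
      (congrArg Subtype.val h)
    exact Subtype.ext (by simpa [liftCoe_zero] using congrArg (· 0) this)

theorem exists_liftCoe_eq (hp : IsCoveringMap p) (x : E) {t : ℝ} (hx : p x = t) :
    ∃ e, hp.liftCoe e t = x := by
  obtain ⟨F, hFt, hpF⟩ := hp.exists_lift_coe t x hx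
  have hpF' (t : ℝ) : p (F t) = t := congrFun hpF t
  let e : p ⁻¹' {0} := ⟨F 0, by simp [hpF']⟩
  have hF : ⇑F = hp.liftCoe e :=
    hp.eq_liftCoe F.continuous hpF' (t₀ := 0) e (hp.liftCoe_zero e).symm
  exact ⟨e, hF ▸ hFt⟩

theorem exists_liftCoe_Ico_eq (hp : IsCoveringMap p) {m : ℕ} (r : Fin m → p ⁻¹' {0})
    (hr : ∀ e, ∃ j, ∃ k < minimalPeriod hp.circleMonodromy (r j),
      hp.circleMonodromy^[k] (r j) = e)
    (x : E) : ∃ j, ∃ t ∈ Ico (0 : ℝ) (minimalPeriod hp.circleMonodromy (r j)),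
      hp.liftCoe (r j) t = x := by
  obtain ⟨t, ht⟩ := QuotientAddGroup.mk_surjective (p x)
  obtain ⟨e, he⟩ := hp.exists_liftCoe_eq x (t := Int.fract t)
    (by rw [AddCircle.coe_fract]; exact ht.symm)
  obtain ⟨j, k, hk, rfl⟩ := hr e
  refine ⟨j, Int.fract t + k, ⟨by positivity, ?_⟩, by rw [liftCoe_add_nat, he]⟩
  have : (k : ℝ) + 1 ≤ minimalPeriod hp.circleMonodromy (r j) := by exact_mod_cast hk
  linarith [Int.fract_lt_one t]

end IsCoveringMap

/-- `r` enumerates one point on each cycle of the permutation `f`. -/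
theorem Function.Injective.exists_orbit_representatives {X : Type*} [Finite X] {f : X → X}
    (hf : Injective f) :
    ∃ (m : ℕ) (r : Fin m → X), ∑ j, minimalPeriod f (r j) = Nat.card X ∧
      ∀ x, ∃ j, ∃ k < minimalPeriod f (r j), f^[k] (r j) = x := by
  classical
  let σ : Equiv.Perm X := Equiv.ofBijective f (Finite.injective_iff_bijective.mp hf)
  have hσ : (σ • ·) = f := rfl
  let Ω := MulAction.orbitRel.Quotient (Subgroup.zpowers σ) X
  have : Fintype X := Fintype.ofFinite X
  let ι : Fin (Fintype.card Ω) ≃ Ω := (Fintype.equivFin Ω).symm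
  refine ⟨Fintype.card Ω, fun j => (ι j).out, ?_, fun x => ?_⟩
  · rw [Equiv.sum_comp ι (fun ω => minimalPeriod f ω.out), Nat.card_eq_fintype_card,
      Fintype.card_congr (MulAction.selfEquivSigmaOrbits (Subgroup.zpowers σ) X),
      Fintype.card_sigma]
    simp_rw [← hσ, MulAction.minimalPeriod_eq_card]
    exact Finset.sum_congr rfl fun _ _ => Fintype.card_congr (Equiv.refl _)
  · set ω := ι.symm ⟦x⟧
    set e := (ι ω).out
    have hx : x ∈ MulAction.orbit (Subgroup.zpowers σ) e := by
      rw [← MulAction.orbitRel.Quotient.orbit_eq_orbit_out _ Quotient.out_eq',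
        Equiv.apply_symm_apply]
      exact MulAction.orbitRel.Quotient.mem_orbit.mpr rfl
    obtain ⟨⟨g, hg⟩, hgx⟩ := hx
    obtain ⟨z, rfl⟩ := Subgroup.mem_zpowers_iff.mp hg
    have hpos : 0 < minimalPeriod f e :=
      minimalPeriod_pos_of_mem_periodicPts (hf.mem_periodicPts e)
    have hpos' : 0 < (minimalPeriod f e : ℤ) := by exact_mod_cast hpos
    have hnonneg := Int.emod_nonneg z hpos'.ne'
    have := Int.emod_lt_of_pos z hpos'
    refine ⟨ω, (z % minimalPeriod f e).toNat, show _ < minimalPeriod f e by omega, ?_⟩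
    rw [← hgx]
    change f^[_] e = (σ ^ z) • e
    rw [← MulAction.zpow_smul_mod_minimalPeriod, hσ, ← Int.toNat_of_nonneg hnonneg,
      zpow_natCast, Equiv.Perm.smul_def, Equiv.Perm.coe_pow]
    rfl

section ProductFibres

variable {X Y : Type*} (A : Set (X × Y)) (s : X)

def fstPreimageEquivSection : (fun z : A => z.1.1) ⁻¹' {s} ≃ {y | (s, y) ∈ A} where
  toFun z := ⟨z.1.1.2, by obtain ⟨⟨⟨s', y⟩, h⟩, rfl : s' = s⟩ := z; exact h⟩
  invFun y := ⟨⟨(s, y.1), y.2⟩, rfl⟩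
  left_inv := by rintro ⟨⟨⟨s', y⟩, h⟩, rfl : s' = s⟩; rfl
  right_inv _ := rfl

variable {A s}

theorem finite_fst_preimage_singleton (h : {y | (s, y) ∈ A}.Finite) :
    ((fun z : A => z.1.1) ⁻¹' {s}).Finite :=
  have := h.to_subtype
  Set.finite_coe_iff.mp (.of_equiv _ (fstPreimageEquivSection A s).symm)

theorem ncard_fst_preimage_singleton :
    ((fun z : A => z.1.1) ⁻¹' {s}).ncard = {y | (s, y) ∈ A}.ncard := by
  rw [← Nat.card_coe_set_eq, Nat.card_congr (fstPreimageEquivSection A s), Nat.card_coe_set_eq]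

end ProductFibres

section SeparatedSections

variable {X Y : Type*} [TopologicalSpace X] [MetricSpace Y] {A : Set (X × Y)} {c : ℝ}

theorem isLocallyInjective_fst_of_separated (hc : 0 < c)
    (hsep : ∀ (s : X) (x y : Y), (s, x) ∈ A → (s, y) ∈ A → x ≠ y → c ≤ dist x y) :
    IsLocallyInjective (fun z : A => z.1.1) := fun z => by
  refine ⟨{w | dist w.1.2 z.1.2 < c / 2}, isOpen_lt (by fun_prop) continuous_const,
    by simpa using hc, fun w hw w' hw' hww' => ?_⟩
  by_contra hne
  have hy : w.1.2 ≠ w'.1.2 := fun h => hne (Subtype.ext (Prod.ext hww' h))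
  have hcle := hsep w.1.1 _ _ w.2 (by rw [show w.1.1 = w'.1.1 from hww']; exact w'.2) hy
  have := dist_triangle_right w.1.2 w'.1.2 z.1.2
  change dist _ _ < c / 2 at hw hw'
  linarith

theorem isCoveringMap_fst_of_separated [T2Space X] (hA : IsCompact A) {n : ℕ} (hc : 0 < c)
    (hsec : ∀ s : X, {y | (s, y) ∈ A}.Finite ∧ {y | (s, y) ∈ A}.ncard = n)
    (hsep : ∀ (s : X) (x y : Y), (s, x) ∈ A → (s, y) ∈ A → x ≠ y → c ≤ dist x y) :
    IsCoveringMap (fun z : A => z.1.1) :=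
  have := isCompact_iff_compactSpace.mp hA
  IsClosedMap.isCoveringMap_of_isLocallyInjective (by fun_prop)
    (Continuous.isClosedMap (by fun_prop)) (isLocallyInjective_fst_of_separated hc hsep)
    (fun s => finite_fst_preimage_singleton (hsec s).1)
    (fun s => ncard_fst_preimage_singleton.trans (hsec s).2)

end SeparatedSections

/-- Let `A ⊆ 𝕊¹ × ℝ^d` (with `𝕊¹ = ℝ/ℤ`) be compact such that for
some `n ∈ ℕ` and `c > 0`, every section `A_s` has exactly `n` elements and any
two distinct points of `A_s` are at distance at least `c`.  Then `A` is the
union of `m ≤ n` closed curves: there are continuous functions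
`ψ_1, …, ψ_m : ℝ → ℝ^d`, each periodic with a positive integer period `τ_j`,
with `τ_1 + ⋯ + τ_m = n`, such that
`A = ⋃_j {(s mod 1, ψ_j s) : s ∈ [0, τ_j)}`. -/
theorem compact_finite_sections_union_of_periodic_graphs
    (d n : ℕ) (c : ℝ) (hc : 0 < c)
    (A : Set (AddCircle (1 : ℝ) × EuclideanSpace ℝ (Fin d)))
    (hA : IsCompact A)
    (hsec : ∀ s : AddCircle (1 : ℝ),
      {x | (s, x) ∈ A}.Finite ∧ {x | (s, x) ∈ A}.ncard = n)
    (hsep : ∀ (s : AddCircle (1 : ℝ)) (x y : EuclideanSpace ℝ (Fin d)),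
      (s, x) ∈ A → (s, y) ∈ A → x ≠ y → c ≤ dist x y) :
    ∃ m : ℕ, m ≤ n ∧
      ∃ (ψ : Fin m → ℝ → EuclideanSpace ℝ (Fin d)) (τ : Fin m → ℕ),
        (∀ j, Continuous (ψ j)) ∧
        (∀ j, 1 ≤ τ j) ∧
        (∀ j (s : ℝ), ψ j (s + τ j) = ψ j s) ∧
        (∑ j, τ j) = n ∧
        A = ⋃ j, (fun s : ℝ => ((s : AddCircle (1 : ℝ)), ψ j s)) ''
          Ico (0 : ℝ) (τ j) := by
  have hp := isCoveringMap_fst_of_separated hA hc hsec hsep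
  have := (finite_fst_preimage_singleton (hsec 0).1).to_subtype
  have hcard : Nat.card ((fun z : A => z.1.1) ⁻¹' {0}) = n := by
    rw [Nat.card_coe_set_eq, ncard_fst_preimage_singleton, (hsec 0).2]
  obtain ⟨m, r, hsum, hcover⟩ := hp.circleMonodromy_injective.exists_orbit_representatives
  let τ j := minimalPeriod hp.circleMonodromy (r j)
  have hτ (j : Fin m) : 1 ≤ τ j :=
    minimalPeriod_pos_of_mem_periodicPts (hp.circleMonodromy_injective.mem_periodicPts _)
  have hgraph (j : Fin m) (t : ℝ) :
      ((t : AddCircle (1 : ℝ)), (hp.liftCoe (r j) t).1.2) = (hp.liftCoe (r j) t).1 :=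
    Prod.ext (hp.apply_liftCoe _ t).symm rfl
  refine ⟨m, ?_, fun j t => (hp.liftCoe (r j) t).1.2, τ, fun j => by fun_prop, hτ,
    fun j t => by simp only [τ, hp.liftCoe_add_minimalPeriod], hsum.trans hcard, ?_⟩
  · calc m = ∑ _ : Fin m, 1 := by simp
      _ ≤ ∑ j, τ j := Finset.sum_le_sum fun j _ => hτ j
      _ = n := hsum.trans hcard
  · ext z
    simp only [mem_iUnion, mem_image, hgraph]
    refine ⟨fun hz => ?_, fun ⟨j, t, _, hz⟩ => hz ▸ (hp.liftCoe (r j) t).2⟩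
    obtain ⟨j, t, ht, hzt⟩ := hp.exists_liftCoe_Ico_eq r hcover ⟨z, hz⟩
    exact ⟨j, t, ht, congrArg Subtype.val hzt⟩
end

section
/- Let φ be a discrete-time RDS over θ on a Polish metric space X with skew product Θ, let (Φ_n) be a sequence of bounded random continuous functions that is subadditive with respect to Θ, and let μ_k (k ∈ ℕ) and μ be probability measures on Ω×X, each invariant under Θ and with marginal ℙ on Ω. If ∫ f dμ_k → ∫ f dμ for every bounded f : Ω×X → ℝ that is measurable in ω and continuous in x, then limsup_{k→∞} λ(μ_k,φ) ≤ λ(μ,φ); that is, the function μ ↦ λ(μ,φ) is upper semi-continuous on the set of Θ-invariant probability measures with marginal ℙ. -/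
open MeasureTheory Metric Function Filter Topology TopologicalSpace

/-!
For each `k`, invariance of `μ_k` makes `n ↦ ∫ Φ_n dμ_k` a subadditive sequence, so by Fekete's
lemma its rate `λ(μ_k)` is the infimum of `(1/n) ∫ Φ_n dμ_k`. Hence `λ(μ_k) ≤ (1/n) ∫ Φ_n dμ_k`
for every `n ≥ 1`; letting `k → ∞` (each `Φ_n` is an admissible test function) gives
`limsup_k λ(μ_k) ≤ (1/n) ∫ Φ_n dμ`, and letting `n → ∞` gives `λ(μ)`. An infimum of continuous
functions of the measure is upper semicontinuous.
-/

theorem Subadditive.le_div_of_tendsto {u : ℕ → ℝ} (h : Subadditive u) {L : ℝ}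
    (hL : Tendsto (fun n => u n / n) atTop (𝓝 L)) {n : ℕ} (hn : n ≠ 0) : L ≤ u n / n := by
  rw [tendsto_nhds_unique hL (h.tendsto_lim hL.bddBelow_range)]
  exact h.lim_le_div hL.bddBelow_range hn

theorem EReal.limsup_coe_le_of_forall_le_of_tendsto {ι κ : Type*} {F : Filter ι} {G : Filter κ}
    [F.NeBot] [G.NeBot] {L : κ → ℝ} {c : ι → κ → ℝ} {d : ι → ℝ} {l : ℝ}
    (hle : ∀ᶠ n in F, ∀ k, L k ≤ c n k) (hc : ∀ n, Tendsto (c n) G (𝓝 (d n)))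
    (hd : Tendsto d F (𝓝 l)) :
    limsup (fun k => (L k : EReal)) G ≤ l := by
  refine ge_of_tendsto (EReal.tendsto_coe.2 hd) (hle.mono fun n hn => ?_)
  calc limsup (fun k => (L k : EReal)) G
      ≤ limsup (fun k => (c n k : EReal)) G :=
        limsup_le_limsup (Eventually.of_forall fun k => EReal.coe_le_coe_iff.2 (hn k))
    _ = d n := (EReal.tendsto_coe.2 (hc n)).limsup_eq

theorem subadditive_integral_of_le_add_comp_iterate {α : Type*} [MeasurableSpace α]
    {ν : Measure α} {T : α → α} (hT : MeasurePreserving T ν ν) {Ψ : ℕ → α → ℝ}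
    (hint : ∀ n, Integrable (Ψ n) ν)
    (hsub : ∀ n m x, Ψ (n + m) x ≤ Ψ m x + Ψ n (T^[m] x)) :
    Subadditive fun n => ∫ x, Ψ n x ∂ν := by
  intro m n
  have hTm := hT.iterate m
  have hint' : Integrable (fun x => Ψ n (T^[m] x)) ν := hTm.integrable_comp_of_integrable (hint n)
  have hcomp : ∫ x, Ψ n (T^[m] x) ∂ν = ∫ x, Ψ n x ∂ν := by
    rw [← integral_map hTm.measurable.aemeasurable
      (by rw [hTm.map_eq]; exact (hint n).aestronglyMeasurable), hTm.map_eq]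
  calc ∫ x, Ψ (m + n) x ∂ν
      ≤ ∫ x, Ψ m x + Ψ n (T^[m] x) ∂ν :=
        integral_mono (hint _) ((hint m).add hint')
          fun x => add_comm m n ▸ hsub n m x
    _ = ∫ x, Ψ m x ∂ν + ∫ x, Ψ n x ∂ν := by
        rw [integral_add (hint m) hint', hcomp]

theorem measurable_uncurry_of_measurable_of_continuous {Ω X β : Type*} [MeasurableSpace Ω]
    [TopologicalSpace X] [MetrizableSpace X] [SecondCountableTopology X] [MeasurableSpace X]
    [OpensMeasurableSpace X] [TopologicalSpace β] [PseudoMetrizableSpace β] [MeasurableSpace β]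
    [BorelSpace β] {f : Ω → X → β} (hm : ∀ x, Measurable fun ω => f ω x)
    (hc : ∀ ω, Continuous (f ω)) :
    Measurable (uncurry f) :=
  (measurable_uncurry_of_continuous_of_measurable (u := fun x ω => f ω x) hc hm).comp
    measurable_swap

section SkewProduct

variable {Ω X : Type*} (θ : Ω → Ω) (φ : ℕ → Ω → X → X)

def skewProduct (p : Ω × X) : Ω × X := (θ p.1, φ 1 p.1 p.2)

variable {θ φ}

theorem skewProduct_iterate (hφ0 : ∀ ω, φ 0 ω = id)
    (hcocycle : ∀ (n m : ℕ) (ω : Ω), φ (n + m) ω = (φ n (θ^[m] ω)) ∘ (φ m ω))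
    (m : ℕ) (p : Ω × X) : (skewProduct θ φ)^[m] p = (θ^[m] p.1, φ m p.1 p.2) := by
  induction m with
  | zero => simp [hφ0]
  | succ m ih =>
    rw [iterate_succ_apply', ih, iterate_succ_apply', add_comm, hcocycle]
    rfl

theorem measurable_skewProduct [MeasurableSpace Ω] [MeasurableSpace X] (hθ : Measurable θ)
    (hφ : Measurable fun p : Ω × X => φ 1 p.1 p.2) : Measurable (skewProduct θ φ) :=
  (hθ.comp measurable_fst).prodMk hφ

end SkewProduct

theorem lambda_upper_semicontinuous_general
    {Ω X : Type*} [MeasurableSpace Ω] [MetricSpace X] [PolishSpace X]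
    [MeasurableSpace X] [BorelSpace X]
    (ℙ : Measure Ω)
    (θ : Ω → Ω) (hθ : MeasurePreserving θ ℙ ℙ)
    (φ : ℕ → Ω → X → X)
    (hφmeas : Measurable fun p : ℕ × Ω × X => φ p.1 p.2.1 p.2.2)
    (hφ0 : ∀ ω, φ 0 ω = id)
    (hcocycle : ∀ (n m : ℕ) (ω : Ω), φ (n + m) ω = (φ n (θ^[m] ω)) ∘ (φ m ω))
    (Φ : ℕ → Ω → X → ℝ)
    (hΦmeas : ∀ n x, Measurable fun ω => Φ n ω x)
    (hΦcont : ∀ n ω, Continuous (Φ n ω))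
    (hΦbdd : ∀ n, ∃ M : ℝ, ∀ ω x, |Φ n ω x| ≤ M)
    (hsub : ∀ (n m : ℕ) (ω : Ω) (x : X),
      Φ (n + m) ω x ≤ Φ m ω x + Φ n (θ^[m] ω) (φ m ω x))
    (μseq : ℕ → Measure (Ω × X)) (μ : Measure (Ω × X))
    (hμseqprob : ∀ k, IsProbabilityMeasure (μseq k))
    (hμseqinv : ∀ k, (μseq k).map (fun p : Ω × X => (θ p.1, φ 1 p.1 p.2)) = μseq k)
    (hconv : ∀ f : Ω × X → ℝ,
      (∀ x : X, Measurable fun ω => f (ω, x)) → (∀ ω : Ω, Continuous fun x => f (ω, x)) →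
      (∃ M : ℝ, ∀ p, |f p| ≤ M) →
      Tendsto (fun k => ∫ p, f p ∂(μseq k)) atTop (nhds (∫ p, f p ∂μ)))
    (L : ℕ → ℝ) (Lμ : ℝ)
    (hL : ∀ k, Tendsto (fun n : ℕ => (n : ℝ)⁻¹ * ∫ p, Φ n p.1 p.2 ∂(μseq k))
      atTop (nhds (L k)))
    (hLμ : Tendsto (fun n : ℕ => (n : ℝ)⁻¹ * ∫ p, Φ n p.1 p.2 ∂μ)
      atTop (nhds Lμ)) :
    limsup (fun k => (L k : EReal)) atTop ≤ (Lμ : EReal) := by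
  have hT : ∀ k, MeasurePreserving (skewProduct θ φ) (μseq k) (μseq k) := fun k =>
    ⟨measurable_skewProduct hθ.measurable (hφmeas.comp (measurable_const.prodMk measurable_id)),
      hμseqinv k⟩
  have hΦbdd' : ∀ n, ∃ M : ℝ, ∀ p : Ω × X, |Φ n p.1 p.2| ≤ M := fun n =>
    (hΦbdd n).imp fun M hM p => hM p.1 p.2
  have hint : ∀ k n, Integrable (fun p : Ω × X => Φ n p.1 p.2) (μseq k) := fun k n =>
    have := hμseqprob k
    have ⟨M, hM⟩ := hΦbdd' n
    .of_bound (measurable_uncurry_of_measurable_of_continuous (hΦmeas n)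
      (hΦcont n)).aestronglyMeasurable M (.of_forall hM)
  have hsubadd : ∀ k, Subadditive fun n => ∫ p, Φ n p.1 p.2 ∂(μseq k) := fun k =>
    subadditive_integral_of_le_add_comp_iterate (hT k) (hint k) fun n m p => by
      simpa only [skewProduct_iterate hφ0 hcocycle] using hsub n m p.1 p.2
  refine EReal.limsup_coe_le_of_forall_le_of_tendsto
    (c := fun n k => (∫ p, Φ n p.1 p.2 ∂(μseq k)) / n) ?_
    (fun n => (hconv _ (hΦmeas n) (hΦcont n) (hΦbdd' n)).div_const _)
    (by simpa only [div_eq_inv_mul] using hLμ)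
  filter_upwards [eventually_ne_atTop 0] with n hn k
  exact (hsubadd k).le_div_of_tendsto (by simpa only [div_eq_inv_mul] using hL k) hn

/-- For a subadditive sequence `(Φ n)` of bounded random continuous
functions over the skew product `Θ` of a discrete-time RDS, the function
`μ ↦ λ(μ,φ)` is upper semi-continuous on the set of `Θ`-invariant probability
measures with marginal `ℙ`: if `∫ f dμ_k → ∫ f dμ` for every bounded `f`
measurable in `ω` and continuous in `x`, then `limsup_k λ(μ_k,φ) ≤ λ(μ,φ)`. -/
theorem lambda_upper_semicontinuous
    {Ω X : Type*} [MeasurableSpace Ω] [MetricSpace X] [PolishSpace X]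
    [MeasurableSpace X] [BorelSpace X]
    (ℙ : Measure Ω) [IsProbabilityMeasure ℙ]
    (θ : Ω → Ω) (hθ : MeasurePreserving θ ℙ ℙ)
    (φ : ℕ → Ω → X → X)
    (hφmeas : Measurable fun p : ℕ × Ω × X => φ p.1 p.2.1 p.2.2)
    (hφ0 : ∀ ω, φ 0 ω = id)
    (hcocycle : ∀ (n m : ℕ) (ω : Ω), φ (n + m) ω = (φ n (θ^[m] ω)) ∘ (φ m ω))
    (hφcont : ∀ n ω, Continuous (φ n ω))
    (Φ : ℕ → Ω → X → ℝ)
    (hΦmeas : ∀ n x, Measurable fun ω => Φ n ω x)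
    (hΦcont : ∀ n ω, Continuous (Φ n ω))
    (hΦbdd : ∀ n, ∃ M : ℝ, ∀ ω x, |Φ n ω x| ≤ M)
    (hsub : ∀ (n m : ℕ) (ω : Ω) (x : X),
      Φ (n + m) ω x ≤ Φ m ω x + Φ n (θ^[m] ω) (φ m ω x))
    (μseq : ℕ → Measure (Ω × X)) (μ : Measure (Ω × X))
    (hμseqprob : ∀ k, IsProbabilityMeasure (μseq k)) (hμprob : IsProbabilityMeasure μ)
    (hμseqinv : ∀ k, (μseq k).map (fun p : Ω × X => (θ p.1, φ 1 p.1 p.2)) = μseq k)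
    (hμinv : μ.map (fun p : Ω × X => (θ p.1, φ 1 p.1 p.2)) = μ)
    (hμseqmarg : ∀ k, (μseq k).map Prod.fst = ℙ) (hμmarg : μ.map Prod.fst = ℙ)
    (hconv : ∀ f : Ω × X → ℝ,
      (∀ x : X, Measurable fun ω => f (ω, x)) → (∀ ω : Ω, Continuous fun x => f (ω, x)) →
      (∃ M : ℝ, ∀ p, |f p| ≤ M) →
      Tendsto (fun k => ∫ p, f p ∂(μseq k)) atTop (nhds (∫ p, f p ∂μ)))
    (L : ℕ → ℝ) (Lμ : ℝ)
    (hL : ∀ k, Tendsto (fun n : ℕ => (n : ℝ)⁻¹ * ∫ p, Φ n p.1 p.2 ∂(μseq k))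
      atTop (nhds (L k)))
    (hLμ : Tendsto (fun n : ℕ => (n : ℝ)⁻¹ * ∫ p, Φ n p.1 p.2 ∂μ)
      atTop (nhds Lμ)) :
    limsup (fun k => (L k : EReal)) atTop ≤ (Lμ : EReal) :=
  lambda_upper_semicontinuous_general ℙ θ hθ φ hφmeas hφ0 hcocycle Φ hΦmeas hΦcont hΦbdd hsub μseq μ
    hμseqprob hμseqinv hconv L Lμ hL hLμ
end

section
/- Let E be a compact metric space and K a random compact set in E×ℝ^d over (Ω,𝓕). For each ω ∈ Ω and s ∈ E set K(ω,s) := {x ∈ ℝ^d : (s,x) ∈ K(ω)}. Then the sections define a random compact set over the base (Ω×E, 𝓕⊗𝓑(E)): every K(ω,s) is a compact (possibly empty) subset of ℝ^d, and (ω,s) ↦ dist(x, K(ω,s)) is 𝓕⊗𝓑(E)-measurable for every x ∈ ℝ^d (with dist(x,∅) := +∞). Moreover, if η : Ω×E → E with each η(ω,·) a homeomorphism and φ : ℕ×Ω×E×ℝ^d → ℝ^d is a cocycle over θ×η such that (s,x) ↦ (η(ω,s), φ(1,ω,s,x)) maps K(ω) onto K(θω) for ℙ-a.e. ω, then φ(k,ω,s)(K(ω,s))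 = K((θ×η)^k(ω,s)) for ℙ-a.e. ω ∈ Ω, all s ∈ E and all k ∈ ℕ. -/
/-!
Each section `K(ω,s)` is the preimage of the compact set `K(ω)` under the closed embedding
`x ↦ (s,x)`, hence compact. For measurability, the constraint `q.1 = s` is relaxed to a penalty:
by compactness of `K(ω)`,
`infEdist x K(ω,s) = ⨆ₙ ⨅_{q ∈ K(ω)} (edist x q.2 + n · edist s q.1)`. Each of these infima is
continuous in `s` and measurable in `ω` (its sublevel sets `{ω | K(ω) meets an open set}` are
read off from the measurable distances `ω ↦ dist(p, K(ω))` at countably many points `p`), so it is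
jointly measurable. Invariance of the sections follows by induction on `k` from the cocycle
identity `φ(k+1,ω,s) = φ(k,θω,η(ω,s)) ∘ φ(1,ω,s)`, using that a.e. `ω` has its whole `θ`-orbit
in the invariance set, since `θ` preserves `ℙ`.
-/

open MeasureTheory Metric Function Set
open scoped ENNReal

lemma IsCompact.isCompact_setOf_prodMk_mem {E V : Type*} [TopologicalSpace E] [T1Space E]
    [TopologicalSpace V] {K : Set (E × V)} (hK : IsCompact K) (s : E) :
    IsCompact {y | (s, y) ∈ K} :=
  (Topology.IsClosedEmbedding.of_continuous_injective_isClosedMap (.prodMk_right s)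
    (Prod.mk_right_injective s) (isClosedMap_prodMk_left s)).isCompact_preimage hK

section RandomCompactSet

variable {Ω X : Type*} [MeasurableSpace Ω] [PseudoMetricSpace X]
  [TopologicalSpace.SeparableSpace X] {K : Ω → Set X}

lemma measurableSet_setOf_inter_nonempty (hKne : ∀ ω, (K ω).Nonempty)
    (hKmeas : ∀ p : X, Measurable fun ω => infDist p (K ω)) {U : Set X} (hU : IsOpen U) :
    MeasurableSet {ω | (K ω ∩ U).Nonempty} := by
  obtain ⟨D, hDc, hDd⟩ := TopologicalSpace.exists_countable_dense X
  have hunion : {ω | (K ω ∩ U).Nonempty}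
      = ⋃ p ∈ D, ⋃ r ∈ {r : ℚ | 0 < r ∧ ball p r ⊆ U}, {ω | infDist p (K ω) < r} := by
    ext ω
    simp only [mem_ofPred_eq, mem_iUnion, exists_prop]
    constructor
    · rintro ⟨q, hqK, hqU⟩
      obtain ⟨ε, hε, hball⟩ := Metric.isOpen_iff.1 hU q hqU
      obtain ⟨r, hr0, hrε⟩ := exists_rat_btwn (half_pos hε)
      obtain ⟨p, hpD, hqp⟩ := hDd.exists_dist_lt q (show (0 : ℝ) < r from hr0)
      refine ⟨p, hpD, r, ⟨mod_cast hr0, fun z hz => hball ?_⟩, ?_⟩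
      · have := dist_triangle z p q
        rw [mem_ball] at hz ⊢
        rw [dist_comm] at hqp
        linarith
      · exact (infDist_le_dist_of_mem hqK).trans_lt (by rwa [dist_comm])
    · rintro ⟨p, -, r, ⟨-, hrU⟩, hinf⟩
      obtain ⟨q, hqK, hq⟩ := (infDist_lt_iff (hKne ω)).1 hinf
      exact ⟨q, hqK, hrU (mem_ball'.2 hq)⟩
  rw [hunion]
  exact .biUnion hDc fun p _ => .biUnion (to_countable _) fun r _ =>
    measurableSet_lt (hKmeas p) measurable_const

lemma measurable_biInf_of_continuous (hKne : ∀ ω, (K ω).Nonempty)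
    (hKmeas : ∀ p : X, Measurable fun ω => infDist p (K ω)) {g : X → ℝ≥0∞} (hg : Continuous g) :
    Measurable fun ω => ⨅ q ∈ K ω, g q := by
  refine measurable_of_Iio fun t => ?_
  have hpre : (fun ω => ⨅ q ∈ K ω, g q) ⁻¹' Iio t = {ω | (K ω ∩ g ⁻¹' Iio t).Nonempty} := by
    ext ω
    simp only [mem_preimage, mem_Iio, iInf_lt_iff, exists_prop]
    rfl
  rw [hpre]
  exact measurableSet_setOf_inter_nonempty hKne hKmeas (isOpen_Iio.preimage hg)

lemma measurable_biInf_of_continuous_uncurry {E : Type*} [TopologicalSpace E]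
    [TopologicalSpace.MetrizableSpace E] [SecondCountableTopology E] [MeasurableSpace E]
    [OpensMeasurableSpace E]
    (hKcpt : ∀ ω, IsCompact (K ω)) (hKne : ∀ ω, (K ω).Nonempty)
    (hKmeas : ∀ p : X, Measurable fun ω => infDist p (K ω))
    {g : E → X → ℝ≥0∞} (hg : Continuous (uncurry g)) :
    Measurable fun p : Ω × E => ⨅ q ∈ K p.1, g p.2 q := by
  have hcont : ∀ ω, Continuous fun s => ⨅ q ∈ K ω, g s q := fun ω => by
    simpa only [sInf_image] using (hKcpt ω).continuous_sInf hg
  have hmeas : ∀ s, Measurable fun ω => ⨅ q ∈ K ω, g s q := fun s =>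
    measurable_biInf_of_continuous hKne hKmeas (hg.comp (.prodMk_right s))
  exact (measurable_uncurry_of_continuous_of_measurable hcont hmeas).comp measurable_swap

end RandomCompactSet

theorem IsCompact.iSup_biInf_eq_biInf_iSup {X ι α : Type*} [TopologicalSpace X] [Preorder ι]
    [IsDirectedOrder ι] [Nonempty ι] [CompleteLinearOrder α] [TopologicalSpace α]
    [OrderTopology α] {K : Set X} (hK : IsCompact K) {f : ι → X → α}
    (hf : ∀ n, Continuous (f n)) (hmono : Monotone f) :
    ⨆ n, ⨅ q ∈ K, f n q = ⨅ q ∈ K, ⨆ n, f n q := by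
  refine le_antisymm (iSup_le fun n => le_iInf₂ fun q hq => (iInf₂_le q hq).trans
    (le_iSup (f · q) n)) ?_
  rcases K.eq_empty_or_nonempty with rfl | hne
  · simp
  set L := ⨆ n, ⨅ q ∈ K, f n q
  -- Each `{f n ≤ L}` meets `K` at a minimiser of `f n`; these sets decrease, so by compactness
  -- they have a common point in `K`.
  have hcommon : (K ∩ ⋂ n, {q | f n q ≤ L}).Nonempty := by
    by_contra hempty
    obtain ⟨n, hn⟩ := hK.elim_directed_family_closed _
      (fun n => isClosed_le (hf n) continuous_const) (not_nonempty_iff_eq_empty.1 hempty)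
      (Antitone.directed_ge fun m n hmn q hq => (hmono hmn q).trans hq)
    obtain ⟨m, hmK, hmin⟩ := hK.exists_isMinOn hne (hf n).continuousOn
    refine hn.subset ⟨hmK, ?_⟩
    calc f n m ≤ ⨅ q ∈ K, f n q := le_iInf₂ fun q hq => hmin hq
      _ ≤ L := le_iSup (fun k => ⨅ q ∈ K, f k q) n
  obtain ⟨q, hqK, hqL⟩ := hcommon
  exact (iInf₂_le q hqK).trans (iSup_le fun n => mem_iInter.1 hqL n)

lemma infEDist_setOf_prodMk_mem_eq_iSup_biInf {E V : Type*} [EMetricSpace E]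
    [PseudoEMetricSpace V] {K : Set (E × V)} (hK : IsCompact K) (s : E) (x : V) :
    infEDist x {y | (s, y) ∈ K}
      = ⨆ n : ℕ, ⨅ q ∈ K, (edist x q.2 + n * edist s q.1) := by
  rw [hK.iSup_biInf_eq_biInf_iSup (fun n => by fun_prop (disch := simp))
    fun m n hmn q => by gcongr]
  refine le_antisymm (le_iInf₂ fun q hq => ?_) (le_infEDist.2 fun y hy => ?_)
  · by_cases hqs : q.1 = s
    · refine le_iSup_of_le 0 ?_
      simpa using infEDist_le_edist_of_mem (x := x) (show q.2 ∈ {y | (s, y) ∈ K} from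
        hqs ▸ hq)
    · have hne : edist s q.1 ≠ 0 := (edist_pos.2 (Ne.symm hqs)).ne'
      calc infEDist x {y | (s, y) ∈ K} ≤ ⨆ n : ℕ, (n : ℝ≥0∞) * edist s q.1 := by
            rw [← ENNReal.iSup_mul, ENNReal.iSup_natCast, ENNReal.top_mul hne]
            exact le_top
        _ ≤ ⨆ n : ℕ, (edist x q.2 + n * edist s q.1) := iSup_mono fun n => le_add_self
  · exact iInf₂_le_of_le (s, y) hy (iSup_le fun n => by simp)

lemma image_setOf_prodMk_mem_of_image_eq {E V : Type*} {K K' : Set (E × V)} {h : E → E}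
    (hh : Injective h) {f : E → V → V} (hK : (fun q => (h q.1, f q.1 q.2)) '' K = K') (s : E) :
    f s '' {x | (s, x) ∈ K} = {x | (h s, x) ∈ K'} := by
  subst hK
  ext y
  simp only [mem_image, mem_ofPred_eq, Prod.exists, Prod.mk.injEq, hh.eq_iff]
  grind

lemma image_setOf_prodMk_mem_cocycle {Ω E V : Type*} {θ : Ω → Ω} {η : Ω → E → E}
    (hη : ∀ ω, Injective (η ω)) {T : Ω × E → Ω × E} (hT : ∀ p, T p = (θ p.1, η p.1 p.2))
    {φ : ℕ → Ω → E → V → V} (hφ0 : ∀ ω s, φ 0 ω s = id)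
    (hcocycle : ∀ n ω s, φ (n + 1) ω s = φ n (T (ω, s)).1 (T (ω, s)).2 ∘ φ 1 ω s)
    {K : Ω → Set (E × V)} {ω : Ω}
    (hinv : ∀ n, (fun q => (η (θ^[n] ω) q.1, φ 1 (θ^[n] ω) q.1 q.2)) '' K (θ^[n] ω)
      = K (θ (θ^[n] ω))) (s : E) (k : ℕ) :
    φ k ω s '' {x | (s, x) ∈ K ω} = {x | ((T^[k] (ω, s)).2, x) ∈ K (T^[k] (ω, s)).1} := by
  induction k generalizing ω s with
  | zero => simp [hφ0]
  | succ k ih =>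
    have hTs : T (ω, s) = (θ ω, η ω s) := hT (ω, s)
    have hstep : φ 1 ω s '' {x | (s, x) ∈ K ω} = {x | (η ω s, x) ∈ K (θ ω)} :=
      image_setOf_prodMk_mem_of_image_eq (hη ω) (hinv 0) s
    rw [hcocycle k, hTs, image_comp, hstep, ih (fun n => hinv (n + 1)),
      iterate_succ_apply, hTs]

theorem sections_random_compact_and_invariant_general
    {Ω E : Type*} [MeasurableSpace Ω] [MetricSpace E] [CompactSpace E]
    [MeasurableSpace E] [BorelSpace E] (d : ℕ)
    (ℙ : Measure Ω)
    (θ : Ω → Ω) (hθ : MeasurePreserving θ ℙ ℙ)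
    (η : Ω → E → E) (hηhomeo : ∀ ω, IsHomeomorph (η ω))
    (T : Ω × E → Ω × E) (hT : ∀ p : Ω × E, T p = (θ p.1, η p.1 p.2))
    (φ : ℕ → Ω → E → EuclideanSpace ℝ (Fin d) → EuclideanSpace ℝ (Fin d))
    (hφ0 : ∀ ω s, φ 0 ω s = id)
    (hcocycle : ∀ (n m : ℕ) (ω : Ω) (s : E),
      φ (n + m) ω s = (φ n (T^[m] (ω, s)).1 (T^[m] (ω, s)).2) ∘ (φ m ω s))
    (K : Ω → Set (E × EuclideanSpace ℝ (Fin d)))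
    (hKcpt : ∀ ω, IsCompact (K ω)) (hKne : ∀ ω, (K ω).Nonempty)
    (hKmeas : ∀ p : E × EuclideanSpace ℝ (Fin d),
      Measurable fun ω => infDist p (K ω))
    (hKinv : ∀ᵐ ω ∂ℙ,
      (fun q : E × EuclideanSpace ℝ (Fin d) => (η ω q.1, φ 1 ω q.1 q.2)) '' K ω
        = K (θ ω)) :
    -- each section is compact
    (∀ (ω : Ω) (s : E), IsCompact {x | (s, x) ∈ K ω}) ∧
    -- joint measurability of the distance to the section (with `infEdist x ∅ = ⊤`)
    (∀ x : EuclideanSpace ℝ (Fin d),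
      Measurable fun p : Ω × E => EMetric.infEdist x {y | (p.2, y) ∈ K p.1}) ∧
    -- invariance of the sections
    (∀ᵐ ω ∂ℙ, ∀ (s : E) (k : ℕ),
      φ k ω s '' {x | (s, x) ∈ K ω}
        = {x | ((T^[k] (ω, s)).2, x) ∈ K (T^[k] (ω, s)).1}) := by
  refine ⟨fun ω s => (hKcpt ω).isCompact_setOf_prodMk_mem s, fun x => ?_, ?_⟩
  · show Measurable fun p : Ω × E => infEDist x {y | (p.2, y) ∈ K p.1}
    simp_rw [infEDist_setOf_prodMk_mem_eq_iSup_biInf (hKcpt _)]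
    exact .iSup fun n => measurable_biInf_of_continuous_uncurry hKcpt hKne hKmeas
      (g := fun s q => edist x q.2 + n * edist s q.1) (by fun_prop (disch := simp))
  · filter_upwards [ae_all_iff.2 fun n => (hθ.iterate n).quasiMeasurePreserving.ae hKinv]
      with ω hω s k
    exact image_setOf_prodMk_mem_cocycle (fun ω => (hηhomeo ω).injective) hT hφ0
      (fun n => hcocycle n 1) hω s k

/-- The sections `K(ω,s) = {x : (s,x) ∈ K ω}` of a random compact
set `K` in `E × ℝ^d` form a random compact set over the base
`(Ω × E, 𝓕 ⊗ 𝓑(E))`: each `K(ω,s)` is compact (possibly empty) and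
`(ω,s) ↦ dist(x, K(ω,s))` is jointly measurable (with `dist(x,∅) = +∞`,
encoded via `EMetric.infEdist`).  Moreover, if `φ` is a cocycle over `θ×η`
such that `(s,x) ↦ (η ω s, φ 1 ω s x)` maps `K ω` onto `K (θ ω)` a.e., then
`φ(k,ω,s)(K(ω,s)) = K((θ×η)^k(ω,s))` for ℙ-a.e. `ω`, all `s` and all `k`. -/
theorem sections_random_compact_and_invariant
    {Ω E : Type*} [MeasurableSpace Ω] [MetricSpace E] [CompactSpace E]
    [MeasurableSpace E] [BorelSpace E] (d : ℕ)
    (ℙ : Measure Ω) [IsProbabilityMeasure ℙ]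
    (θ : Ω → Ω) (hθ : MeasurePreserving θ ℙ ℙ)
    (η : Ω → E → E) (hηhomeo : ∀ ω, IsHomeomorph (η ω))
    (hηmeas : Measurable fun p : Ω × E => η p.1 p.2)
    (T : Ω × E → Ω × E) (hT : ∀ p : Ω × E, T p = (θ p.1, η p.1 p.2))
    (φ : ℕ → Ω → E → EuclideanSpace ℝ (Fin d) → EuclideanSpace ℝ (Fin d))
    (hφmeas : Measurable
      fun p : ℕ × Ω × E × EuclideanSpace ℝ (Fin d) => φ p.1 p.2.1 p.2.2.1 p.2.2.2)
    (hφ0 : ∀ ω s, φ 0 ω s = id)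
    (hcocycle : ∀ (n m : ℕ) (ω : Ω) (s : E),
      φ (n + m) ω s = (φ n (T^[m] (ω, s)).1 (T^[m] (ω, s)).2) ∘ (φ m ω s))
    (K : Ω → Set (E × EuclideanSpace ℝ (Fin d)))
    (hKcpt : ∀ ω, IsCompact (K ω)) (hKne : ∀ ω, (K ω).Nonempty)
    (hKmeas : ∀ p : E × EuclideanSpace ℝ (Fin d),
      Measurable fun ω => infDist p (K ω))
    (hKinv : ∀ᵐ ω ∂ℙ,
      (fun q : E × EuclideanSpace ℝ (Fin d) => (η ω q.1, φ 1 ω q.1 q.2)) '' K ω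
        = K (θ ω)) :
    -- each section is compact
    (∀ (ω : Ω) (s : E), IsCompact {x | (s, x) ∈ K ω}) ∧
    -- joint measurability of the distance to the section (with `infEdist x ∅ = ⊤`)
    (∀ x : EuclideanSpace ℝ (Fin d),
      Measurable fun p : Ω × E => EMetric.infEdist x {y | (p.2, y) ∈ K p.1}) ∧
    -- invariance of the sections
    (∀ᵐ ω ∂ℙ, ∀ (s : E) (k : ℕ),
      φ k ω s '' {x | (s, x) ∈ K ω}
        = {x | ((T^[k] (ω, s)).2, x) ∈ K (T^[k] (ω, s)).1}) :=
  sections_random_compact_and_invariant_general d ℙ θ hθ η hηhomeo T hT φ hφ0 hcocycle K hKcpt hKne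
    hKmeas hKinv
end

section
/- Let E be a compact metric space, K a random compact set in E×ℝ^d over (Ω,𝓕) with sections K(ω,s) := {x ∈ ℝ^d : (s,x) ∈ K(ω)}, and let ρ : Ω → (0,∞) be measurable. Define N(ω,s) as the smallest number of open balls in ℝ^d of radius ρ(ω) centred at points of K(ω,s) that are needed to cover K(ω,s) (with N(ω,s) = 0 if K(ω,s) = ∅). Then N is 𝓕⊗𝓑(E)-measurable. -/
/-! Compactness gives every cover of `K(ω,s)` by finitely many open `ρ ω`-balls some slack, so
its centres may be moved into a fixed countable dense set `D`, provided we remember that each new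
centre lies within a rational distance `b` of `K(ω,s)` and we use a rational radius `a` with
`a + b ≤ ρ ω`; conversely such data give a cover of the required kind. Hence `{N ≤ m}` is a
countable Boolean combination of events `{q ≤ ρ ω}` and of hitting events
`{K(ω,s) ∩ F ≠ ∅}` for closed `F`. A hitting event is measurable: as `K(ω)` is compact,
`K(ω,s)` meets `F` iff for every `n` some `x ∈ D` is `1/(n+1)`-close to `F` with `(s,x)`
`1/(n+1)`-close to `K(ω)`, and `(ω,s) ↦ dist((s,x), K(ω))` is jointly measurable, being
measurable in `ω` and continuous in `s`. -/

open MeasureTheory Metric Set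

section Covering

variable {X ι : Type*} [MetricSpace X] {S : Set X} {r : ℝ}

/-- As `sInf ∅ = 0`, this is `0` if `S` has no finite cover; that cannot happen for compact `S`
and `r > 0`. -/
noncomputable def ballCoveringNumber (r : ℝ) (S : Set X) : ℕ :=
  sInf {m | ∃ t : Finset X, ↑t ⊆ S ∧ t.card = m ∧ S ⊆ ⋃ y ∈ t, ball y r}

theorem ballCoveringNumber_le_iff (hS : IsCompact S) (hr : 0 < r) {m : ℕ} :
    ballCoveringNumber r S ≤ m ↔
      ∃ t : Finset X, ↑t ⊆ S ∧ t.card ≤ m ∧ S ⊆ ⋃ y ∈ t, ball y r := by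
  have hne : ∃ m, ∃ t : Finset X, ↑t ⊆ S ∧ t.card = m ∧ S ⊆ ⋃ y ∈ t, ball y r := by
    obtain ⟨t, htS, hfin, hcov⟩ := hS.finite_cover_balls hr
    exact ⟨_, hfin.toFinset, by simpa using htS, rfl, by simpa using hcov⟩
  unfold ballCoveringNumber
  constructor
  · intro hm
    obtain ⟨t, htS, ht, hcov⟩ := Nat.sInf_mem hne
    exact ⟨t, htS, ht ▸ hm, hcov⟩
  · rintro ⟨t, htS, htm, hcov⟩
    refine (Nat.sInf_le ?_).trans htm
    exact ⟨t, htS, rfl, hcov⟩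

theorem IsCompact.exists_lt_subset_biUnion_ball (hS : IsCompact S) {t : Finset X}
    (hcov : S ⊆ ⋃ y ∈ t, ball y r) : ∃ c < r, S ⊆ ⋃ y ∈ t, ball y c := by
  have : Nonempty (Iio r) := ⟨⟨r - 1, by simp⟩⟩
  have hcov' : S ⊆ ⋃ c : Iio r, ⋃ y ∈ t, ball y c := by
    intro z hz
    obtain ⟨y, hy, hzy⟩ := mem_iUnion₂.mp (hcov hz)
    obtain ⟨c, hzc, hcr⟩ := exists_between (mem_ball.mp hzy)
    exact mem_iUnion.mpr ⟨⟨c, hcr⟩, mem_iUnion₂.mpr ⟨y, hy, hzc⟩⟩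
  obtain ⟨c, hc⟩ := hS.elim_directed_cover _ (fun _ => isOpen_biUnion fun _ _ => isOpen_ball)
    hcov' (Monotone.directed_le fun c c' hcc' =>
      biUnion_mono subset_rfl fun _ _ => ball_subset_ball hcc')
  exact ⟨c, c.2, hc⟩

theorem exists_denseRange_cover (hS : IsCompact S) {c : ι → X} (hc : DenseRange c)
    {t : Finset X} (htS : ↑t ⊆ S) (hcov : S ⊆ ⋃ y ∈ t, ball y r) :
    ∃ u : Finset ι, u.card ≤ t.card ∧ ∃ a b : ℚ, (a : ℝ) + b ≤ r ∧
      (∀ i ∈ u, (S ∩ closedBall (c i) b).Nonempty) ∧ S ⊆ ⋃ i ∈ u, ball (c i) a := by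
  classical
  obtain ⟨r', hr'r, hr'⟩ := hS.exists_lt_subset_biUnion_ball hcov
  obtain ⟨b, hb0, hb⟩ := exists_rat_btwn (show (0 : ℝ) < (r - r') / 2 by linarith)
  obtain ⟨a, hr'a, har⟩ := exists_rat_btwn (show r' + b < r - b by linarith)
  choose near hnear using fun y => hc.exists_dist_lt y hb0
  refine ⟨t.image near, Finset.card_image_le, a, b, by linarith, ?_, ?_⟩
  · simp only [Finset.forall_mem_image]
    exact fun y hy => ⟨y, htS hy, mem_closedBall.mpr (hnear y).le⟩
  · intro z hz
    obtain ⟨y, hy, hzy⟩ := mem_iUnion₂.mp (hr' hz)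
    refine mem_iUnion₂.mpr ⟨near y, Finset.mem_image_of_mem near hy, mem_ball.mpr ?_⟩
    calc dist z (c (near y)) ≤ dist z y + dist y (c (near y)) := dist_triangle _ _ _
      _ < r' + b := add_lt_add (mem_ball.mp hzy) (hnear y)
      _ < a := hr'a

theorem exists_cover_of_near_cover (c : ι → X) {u : Finset ι} {a b : ℝ} (hab : a + b ≤ r)
    (hnear : ∀ i ∈ u, (S ∩ closedBall (c i) b).Nonempty) (hcov : S ⊆ ⋃ i ∈ u, ball (c i) a) :
    ∃ t : Finset X, ↑t ⊆ S ∧ t.card ≤ u.card ∧ S ⊆ ⋃ y ∈ t, ball y r := by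
  classical
  choose x hx using hnear
  refine ⟨u.attach.image fun i : u => x i.1 i.2, ?_,
    Finset.card_image_le.trans u.card_attach.le, ?_⟩
  · intro y hy
    obtain ⟨i, -, rfl⟩ := Finset.mem_image.mp hy
    exact (hx i i.2).1
  · intro z hz
    obtain ⟨i, hi, hzi⟩ := mem_iUnion₂.mp (hcov hz)
    refine mem_iUnion₂.mpr ⟨x i hi, Finset.mem_image.mpr ⟨⟨i, hi⟩, u.mem_attach _, rfl⟩, ?_⟩
    calc dist z (x i hi) ≤ dist z (c i) + dist (x i hi) (c i) := dist_triangle_right _ _ _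
      _ < a + b := add_lt_add_of_lt_of_le (mem_ball.mp hzi) (mem_closedBall.mp (hx i hi).2)
      _ ≤ r := hab

theorem exists_cover_iff_exists_denseRange_cover (hS : IsCompact S) {c : ι → X}
    (hc : DenseRange c) (m : ℕ) :
    (∃ t : Finset X, ↑t ⊆ S ∧ t.card ≤ m ∧ S ⊆ ⋃ y ∈ t, ball y r) ↔
      ∃ u : Finset ι, u.card ≤ m ∧ ∃ a b : ℚ, (a : ℝ) + b ≤ r ∧
        (∀ i ∈ u, (S ∩ closedBall (c i) b).Nonempty) ∧ S ⊆ ⋃ i ∈ u, ball (c i) a := by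
  constructor
  · rintro ⟨t, htS, htm, hcov⟩
    obtain ⟨u, hut, hu⟩ := exists_denseRange_cover hS hc htS hcov
    exact ⟨u, hut.trans htm, hu⟩
  · rintro ⟨u, hum, a, b, hab, hnear, hcov⟩
    obtain ⟨t, htS, htu, htcov⟩ := exists_cover_of_near_cover c hab hnear hcov
    exact ⟨t, htS, htu.trans hum, htcov⟩

end Covering

section Sections

variable {E X ι : Type*} [MetricSpace E] [MetricSpace X] {C : Set (E × X)} {F : Set X}

theorem IsCompact.preimage_prodMk (hC : IsCompact C) (s : E) : IsCompact (Prod.mk s ⁻¹' C) :=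
  (hC.image continuous_snd).of_isClosed_subset (hC.isClosed.preimage (.prodMk_right s))
    fun x hx => ⟨(s, x), hx, rfl⟩

theorem nonempty_preimage_prodMk_inter_iff (hC : IsCompact C) (hF : IsClosed F) {c : ι → X}
    (hc : DenseRange c) (s : E) :
    (Prod.mk s ⁻¹' C ∩ F).Nonempty ↔ ∀ n : ℕ, ∃ i,
      c i ∈ thickening (1 / (n + 1)) F ∧ (s, c i) ∈ thickening (1 / (n + 1)) C := by
  constructor
  · rintro ⟨x, hxC, hxF⟩ n
    obtain ⟨i, hi⟩ := hc.exists_dist_lt x Nat.one_div_pos_of_nat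
    rw [dist_comm] at hi
    exact ⟨i, mem_thickening_iff.mpr ⟨x, hxF, hi⟩,
      mem_thickening_iff.mpr ⟨(s, x), hxC, by simpa [Prod.dist_eq] using hi⟩⟩
  · intro h
    obtain ⟨i, hiF, hiC⟩ := h 0
    obtain ⟨y, hyF, -⟩ := mem_thickening_iff.mp hiF
    obtain ⟨q, hqC, -⟩ := mem_thickening_iff.mp hiC
    -- `g` vanishes on `C` exactly at the points of `{s} × F`, and its infimum over `C` is `0`
    set g : E × X → ℝ := fun p => dist p.1 s + infDist p.2 F
    obtain ⟨p, hpC, hpmin⟩ := hC.exists_isMinOn ⟨q, hqC⟩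
      (by fun_prop : Continuous g).continuousOn
    have hgp : g p ≤ 0 := by
      refine le_of_forall_pos_lt_add fun ε hε => ?_
      obtain ⟨n, hn⟩ := exists_nat_one_div_lt (show 0 < ε / 3 by positivity)
      obtain ⟨i, hiF, hiC⟩ := h n
      obtain ⟨y, hyF, hiy⟩ := mem_thickening_iff.mp hiF
      obtain ⟨q, hqC, hiq⟩ := mem_thickening_iff.mp hiC
      have h1 : dist q.1 s ≤ dist (s, c i) q := by
        rw [dist_comm, Prod.dist_eq]; exact le_max_left _ _
      have h2 : dist q.2 (c i) ≤ dist (s, c i) q := by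
        rw [dist_comm, Prod.dist_eq]; exact le_max_right _ _
      have h3 : infDist q.2 F ≤ dist q.2 (c i) + dist (c i) y :=
        (infDist_le_dist_of_mem hyF).trans (dist_triangle _ _ _)
      calc g p ≤ g q := hpmin hqC
        _ < 0 + ε := by simp only [g]; linarith
    have hp1 : p.1 = s := dist_le_zero.mp (by linarith [infDist_nonneg (x := p.2) (s := F)])
    have hp2 : p.2 ∈ F := (hF.mem_iff_infDist_zero ⟨y, hyF⟩).mpr
      (le_antisymm (by linarith [dist_nonneg (x := p.1) (y := s)]) infDist_nonneg)
    exact ⟨p.2, by rwa [mem_preimage, ← hp1], hp2⟩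

variable {Ω : Type*} [MeasurableSpace Ω] [SecondCountableTopology E] [MeasurableSpace E]
  [BorelSpace E] {K : Ω → Set (E × X)}

theorem measurable_infDist_prodMk (hKmeas : ∀ p, Measurable fun ω => infDist p (K ω)) (x : X) :
    Measurable fun z : Ω × E => infDist (z.2, x) (K z.1) :=
  measurable_swap_iff.mp <| measurable_uncurry_of_continuous_of_measurable
    (u := fun s ω => infDist (s, x) (K ω))
    (fun _ => (continuous_infDist_pt _).comp (.prodMk_left x)) fun s => hKmeas (s, x)

theorem measurable_nonempty_preimage_prodMk_inter [TopologicalSpace.SeparableSpace X]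
    (hKcpt : ∀ ω, IsCompact (K ω)) (hKne : ∀ ω, (K ω).Nonempty)
    (hKmeas : ∀ p, Measurable fun ω => infDist p (K ω)) (hF : IsClosed F) :
    Measurable fun z : Ω × E => (Prod.mk z.2 ⁻¹' K z.1 ∩ F).Nonempty := by
  obtain ⟨D, hDc, hD⟩ := TopologicalSpace.exists_countable_dense X
  have := hDc.to_subtype
  simp_rw [nonempty_preimage_prodMk_inter_iff (hKcpt _) hF hD.denseRange_val,
    mem_thickening_iff_infDist_lt (hKne _)]
  exact .forall fun n => .exists fun i => measurable_const.and
    (measurableSet_lt (measurable_infDist_prodMk hKmeas i) measurable_const).mem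

end Sections

/-- Let `K` be a random compact set in `E × ℝ^d` over `(Ω,𝓕)` with
sections `K(ω,s) = {x : (s,x) ∈ K ω}`, and `ρ : Ω → (0,∞)` measurable.  The
covering number `N(ω,s)`, the smallest number of open balls of radius `ρ ω`
centred at points of `K(ω,s)` needed to cover `K(ω,s)` (`0` for the empty
section), is `𝓕 ⊗ 𝓑(E)`-measurable. -/
theorem covering_number_measurable
    {Ω E : Type*} [MeasurableSpace Ω] [MetricSpace E] [CompactSpace E]
    [MeasurableSpace E] [BorelSpace E] (d : ℕ)
    (K : Ω → Set (E × EuclideanSpace ℝ (Fin d)))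
    (hKcpt : ∀ ω, IsCompact (K ω)) (hKne : ∀ ω, (K ω).Nonempty)
    (hKmeas : ∀ p : E × EuclideanSpace ℝ (Fin d),
      Measurable fun ω => infDist p (K ω))
    (ρ : Ω → ℝ) (hρmeas : Measurable ρ) (hρpos : ∀ ω, 0 < ρ ω)
    (N : Ω × E → ℕ)
    (hN : ∀ (ω : Ω) (s : E),
      N (ω, s) = sInf {m : ℕ | ∃ t : Finset (EuclideanSpace ℝ (Fin d)),
        ↑t ⊆ {x | (s, x) ∈ K ω} ∧ t.card = m ∧
        {x | (s, x) ∈ K ω} ⊆ ⋃ y ∈ t, ball y (ρ ω)}) :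
    Measurable N := by
  obtain ⟨D, hDc, hD⟩ := TopologicalSpace.exists_countable_dense (EuclideanSpace ℝ (Fin d))
  have := hDc.to_subtype
  have hsec (z : Ω × E) : IsCompact (Prod.mk z.2 ⁻¹' K z.1) := (hKcpt z.1).preimage_prodMk z.2
  have hle (m : ℕ) (z : Ω × E) : N z ≤ m ↔ ∃ u : Finset D, u.card ≤ m ∧ ∃ a b : ℚ,
      (a : ℝ) + b ≤ ρ z.1 ∧ (∀ i ∈ u, (Prod.mk z.2 ⁻¹' K z.1 ∩ closedBall ↑i b).Nonempty) ∧
      ¬(Prod.mk z.2 ⁻¹' K z.1 ∩ (⋃ i ∈ u, ball ↑i a)ᶜ).Nonempty := by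
    obtain ⟨ω, s⟩ := z
    rw [hN ω s]
    change ballCoveringNumber (ρ ω) (Prod.mk s ⁻¹' K ω) ≤ m ↔ _
    rw [ballCoveringNumber_le_iff (hsec (ω, s)) (hρpos ω),
      exists_cover_iff_exists_denseRange_cover (hsec (ω, s)) hD.denseRange_val]
    simp only [inter_compl_nonempty_iff, not_not]
  have hhit {F} (hF : IsClosed F) := measurable_nonempty_preimage_prodMk_inter hKcpt hKne hKmeas hF
  refine measurable_of_Iic fun m => measurableSet_setOfPred.mpr ?_
  simp_rw [mem_Iic, hle m]
  exact .exists fun u => measurable_const.and <| .exists fun a => .exists fun b =>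
    (measurableSet_le measurable_const (hρmeas.comp measurable_fst)).mem.and <|
      (Measurable.forall fun i => measurable_const.imp (hhit isClosed_closedBall)).and
      (hhit (isOpen_biUnion fun _ _ => isOpen_ball).isClosed_compl).not
end

section
/- Let φ_1, …, φ_d : ℝ → ℝ^d be continuous functions with pairwise disjoint graphs (φ_i(s) ≠ φ_j(s) for all s ∈ ℝ whenever i ≠ j). Suppose that for every i ∈ {1,…,d} and every m ∈ ℕ there exists an index i_m ∈ {1,…,d} such that φ_i(s+m) = φ_{i_m}(s) for all s ∈ ℝ. Then every φ_i is periodic with some positive integer period τ_i ≤ d. -/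
/-!
Fix `i` and let `g m` be the index with `φ i (s + m) = φ (g m) s`. Among the `d + 1` shifts
`m = 0, …, d` two, say `a < b`, have the same index, so `φ i (s + a) = φ i (s + b)` for all `s`,
i.e. `φ i` has period `b - a ∈ [1, d]`.
-/

theorem Function.periodic_sub_of_forall_add_eq {α β : Type*} [AddCommGroup α] {f : α → β}
    {a b : α} (h : ∀ x, f (x + a) = f (x + b)) : Function.Periodic f (b - a) := fun x => by
  simpa [sub_add_cancel, sub_add_eq_add_sub, add_sub_assoc] using (h (x - a)).symm

theorem Fintype.exists_lt_le_card_map_eq {β : Type*} [Fintype β] (g : ℕ → β) :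
    ∃ a b, a < b ∧ b ≤ Fintype.card β ∧ g a = g b := by
  obtain ⟨x, hx, y, hy, hxy, hg⟩ :=
    Finset.exists_ne_map_eq_of_card_lt_of_maps_to (s := Finset.range (Fintype.card β + 1))
      (t := Finset.univ) (by simp) (fun m _ => Finset.mem_univ (g m))
  rw [Finset.mem_range] at hx hy
  rcases hxy.lt_or_gt with hlt | hlt
  · exact ⟨x, y, hlt, by omega, hg⟩
  · exact ⟨y, x, hlt, by omega, hg.symm⟩

theorem periodic_of_shift_permutes_general
    (d : ℕ) (φ : Fin d → ℝ → EuclideanSpace ℝ (Fin d))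
    (hshift : ∀ (i : Fin d) (m : ℕ), ∃ im : Fin d, ∀ s : ℝ, φ i (s + m) = φ im s) :
    ∀ i : Fin d, ∃ τ : ℕ, 1 ≤ τ ∧ τ ≤ d ∧ ∀ s : ℝ, φ i (s + τ) = φ i s := by
  intro i
  choose g hg using hshift i
  obtain ⟨a, b, hab, hbd, hgab⟩ := Fintype.exists_lt_le_card_map_eq g
  rw [Fintype.card_fin] at hbd
  have hperiodic : Function.Periodic (φ i) ((b : ℝ) - a) :=
    Function.periodic_sub_of_forall_add_eq fun s => by rw [hg, hg, hgab]
  refine ⟨b - a, by omega, by omega, ?_⟩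
  rwa [Nat.cast_sub hab.le]

/-- Let `φ 1, …, φ d : ℝ → ℝ^d` be continuous functions with pairwise
disjoint graphs.  If for every `i` and every `m : ℕ` there is an index `i_m` with
`φ i (s + m) = φ (i_m) s` for all `s`, then every `φ i` is periodic with some positive
integer period `τ i ≤ d`. -/
theorem periodic_of_shift_permutes
    (d : ℕ) (φ : Fin d → ℝ → EuclideanSpace ℝ (Fin d))
    (hcont : ∀ i, Continuous (φ i))
    (hdisj : ∀ i j, i ≠ j → ∀ s : ℝ, φ i s ≠ φ j s)
    (hshift : ∀ (i : Fin d) (m : ℕ), ∃ im : Fin d, ∀ s : ℝ, φ i (s + m) = φ im s) :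
    ∀ i : Fin d, ∃ τ : ℕ, 1 ≤ τ ∧ τ ≤ d ∧ ∀ s : ℝ, φ i (s + τ) = φ i s :=
  periodic_of_shift_permutes_general d φ hshift
end
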